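/- For every real d > 0 there exists M > max(d, 1) such that for all real m ≥ M the mean of the stationary distribution ρ satisfies ∑_{k=0}^∞ k·ρ(k) ≤ 1.01·⌈log(3)·m/d⌉ + 11; in particular ∑_{k=0}^∞ k·ρ(k) + 1 ≤ (6/5)·m/d for all m ≥ M. -/
import Mathlib


open Real

/-- Transition probabilities on the nonnegative integers:
`p(0,1) = 1`, `p(k,k+1) = (1 - d/m)^k` and `p(k,k-1) = 1 - (1 - d/m)^k` for `k ≥ 1`,
and `p(k,l) = 0` otherwise. -/
noncomputable def ptrans (d m : ℝ) (k l : ℕ) : ℝ :=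
  if k = 0 ∧ l = 1 then 1
  else if 1 ≤ k ∧ l = k + 1 then (1 - d / m) ^ k
  else if 1 ≤ k ∧ l + 1 = k then 1 - (1 - d / m) ^ k
  else 0

/-- `ρ̃(0) = 1` and `ρ̃(k) = ∏_{i=0}^{k-1} p(i,i+1)/p(i+1,i)` for `k ≥ 1`. -/
noncomputable def rhoTilde (d m : ℝ) (k : ℕ) : ℝ :=
  ∏ i ∈ Finset.range k, ptrans d m i (i + 1) / ptrans d m (i + 1) i

/-- The stationary distribution `ρ(k) = ρ̃(k) / ∑_{j} ρ̃(j)`. -/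
noncomputable def rhoStat (d m : ℝ) (k : ℕ) : ℝ :=
  rhoTilde d m k / ∑' j, rhoTilde d m j

lemma ptrans_up (d m : ℝ) (i : ℕ) : ptrans d m i (i + 1) = (1 - d / m) ^ i := by
  rcases Nat.eq_zero_or_pos i with h | h
  · subst h; simp [ptrans]
  · rw [ptrans, if_neg (by omega), if_pos ⟨h, rfl⟩]

lemma ptrans_down (d m : ℝ) (i : ℕ) : ptrans d m (i + 1) i = 1 - (1 - d / m) ^ (i + 1) := by
  rw [ptrans, if_neg (by omega), if_neg (by omega), if_pos ⟨by omega, rfl⟩]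

lemma rhoTilde_succ (d m : ℝ) (k : ℕ) :
    rhoTilde d m (k + 1) = rhoTilde d m k * ((1 - d / m) ^ k / (1 - (1 - d / m) ^ (k + 1))) := by
  rw [rhoTilde, Finset.prod_range_succ, ptrans_up, ptrans_down]; rfl

lemma log_three_lt : Real.log 3 < 1.194 := by
  have h1 : Real.log 3 = Real.log 2 + Real.log (3/2) := by
    rw [← Real.log_mul (by norm_num) (by norm_num)]; norm_num
  have h2 : Real.log (3/2) ≤ 1/2 := by
    have := Real.log_le_sub_one_of_pos (by norm_num : (0:ℝ) < 3/2)
    linarith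
  have := Real.log_two_lt_d9
  rw [h1]; linarith

lemma half_norm : ‖(1/2 : ℝ)‖ < 1 := by norm_num [abs_of_pos]

set_option maxHeartbeats 2000000 in
theorem stmt3 (d : ℝ) (hd : 0 < d) :
    ∃ M : ℝ, M > max d 1 ∧ ∀ m : ℝ, M ≤ m →
      (∑' k : ℕ, (k : ℝ) * rhoStat d m k) ≤
          1.01 * (⌈Real.log 3 * m / d⌉ : ℝ) + 11 ∧
      (∑' k : ℕ, (k : ℝ) * rhoStat d m k) + 1 ≤ (6 / 5) * m / d := by
  refine ⟨max d 1 + 1000 * d, by nlinarith [le_max_left d 1, le_max_right d 1], fun m hm => ?_⟩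
  have hm1 : (1:ℝ) ≤ m := le_trans (by nlinarith [le_max_right d 1]) hm
  have hm0 : 0 < m := by linarith
  have hdm : d < m := by nlinarith [le_max_left d 1]
  have htd : 1000 ≤ m / d := by
    rw [le_div_iff₀ hd]; nlinarith [le_max_left d 1]
  have hq0 : 0 < 1 - d / m := by
    have : d / m < 1 := (div_lt_one hm0).mpr hdm
    linarith
  have hq1 : 1 - d / m < 1 := by
    have : 0 < d / m := div_pos hd hm0
    linarith
  -- positivity of rhoTilde
  have hrpos : ∀ k, 0 < rhoTilde d m k := by
    intro k
    induction k with
    | zero => simp [rhoTilde]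
    | succ k ih =>
      rw [rhoTilde_succ]
      have h1 : (1 - d/m) ^ (k+1) < 1 := pow_lt_one₀ hq0.le hq1 (by omega)
      have h2 : (0:ℝ) < (1 - d/m) ^ k := pow_pos hq0 k
      exact mul_pos ih (div_pos h2 (by linarith))
  -- the cutoff
  set x : ℝ := Real.log 3 * m / d with hx
  have hlog3 : 0 ≤ Real.log 3 := Real.log_nonneg (by norm_num)
  have hx0 : 0 ≤ x := by rw [hx]; positivity
  obtain ⟨n, hxn, hnx, hcast⟩ : ∃ n : ℕ, x ≤ (n:ℝ) ∧ (n:ℝ) < x + 1 ∧ ((⌈x⌉ : ℤ) : ℝ) = (n:ℝ) :=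
    ⟨⌈x⌉₊, Nat.le_ceil x, Nat.ceil_lt_add_one hx0, (natCast_ceil_eq_intCast_ceil hx0).symm⟩
  have hq3 : (1 - d / m) ^ n ≤ 1 / 3 := by
    have he : 1 - d / m ≤ Real.exp (-(d/m)) := by
      have := Real.add_one_le_exp (-(d/m))
      linarith
    have h1 : (1 - d/m) ^ n ≤ Real.exp (-(d/m)) ^ n := pow_le_pow_left₀ hq0.le he n
    have h2 : Real.exp (-(d/m)) ^ n = Real.exp ((n:ℝ) * -(d/m)) := (Real.exp_nat_mul _ n).symm
    have h3 : (n:ℝ) * -(d/m) ≤ -Real.log 3 := by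
      have hdm' : 0 < d / m := div_pos hd hm0
      have hmul : x * (d/m) ≤ (n:ℝ) * (d/m) := mul_le_mul_of_nonneg_right hxn hdm'.le
      have hxe : x * (d/m) = Real.log 3 := by
        rw [hx]; field_simp
      linarith
    calc (1 - d/m) ^ n ≤ Real.exp ((n:ℝ) * -(d/m)) := by rw [← h2]; exact h1
      _ ≤ Real.exp (-Real.log 3) := Real.exp_le_exp.mpr h3
      _ = 1 / 3 := by rw [Real.exp_neg, Real.exp_log (by norm_num : (0:ℝ) < 3)]; norm_num
  -- geometric decay past n
  have hhalf : ∀ k, n ≤ k → rhoTilde d m (k + 1) ≤ rhoTilde d m k * (1 / 2) := by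
    intro k hk
    rw [rhoTilde_succ]
    have hqk : (1 - d/m) ^ k ≤ 1/3 :=
      le_trans (pow_le_pow_of_le_one hq0.le hq1.le hk) hq3
    have hqk1 : (1 - d/m) ^ (k+1) ≤ 1/3 :=
      le_trans (pow_le_pow_of_le_one hq0.le hq1.le (by omega)) hq3
    have hden : (2:ℝ)/3 ≤ 1 - (1 - d/m) ^ (k+1) := by linarith
    have h12 : (1 - d/m) ^ k / (1 - (1 - d/m) ^ (k+1)) ≤ 1/2 := by
      have := div_le_div₀ (by norm_num : (0:ℝ) ≤ 1/3) hqk (by norm_num : (0:ℝ) < 2/3) hden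
      linarith
    exact mul_le_mul_of_nonneg_left h12 (hrpos k).le
  have hgeo : ∀ j, rhoTilde d m (n + j) ≤ rhoTilde d m n * (1/2) ^ j := by
    intro j
    induction j with
    | zero => simp
    | succ j ih =>
      calc rhoTilde d m (n + (j+1)) = rhoTilde d m ((n + j) + 1) := by ring_nf
        _ ≤ rhoTilde d m (n + j) * (1/2) := hhalf (n + j) (by omega)
        _ ≤ (rhoTilde d m n * (1/2)^j) * (1/2) :=
            mul_le_mul_of_nonneg_right ih (by norm_num)
        _ = rhoTilde d m n * (1/2)^(j+1) := by ring
  -- summability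
  have hgsum : Summable (fun j : ℕ => rhoTilde d m n * (1/2 : ℝ)^j) :=
    (summable_geometric_of_lt_one (by norm_num) (by norm_num)).mul_left _
  have hsum : Summable (rhoTilde d m) := by
    rw [← summable_nat_add_iff n]
    exact hgsum.of_nonneg_of_le (fun j => (hrpos _).le)
      (fun j => by simpa [add_comm] using hgeo j)
  have hksum' : Summable (fun j : ℕ => rhoTilde d m n * ((j:ℝ) * (1/2)^j)) := by
    have : Summable (fun j : ℕ => (j:ℝ) * (1/2)^j) := by
      have := summable_pow_mul_geometric_of_norm_lt_one (R := ℝ) 1 half_norm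
      simpa using this
    exact this.mul_left _
  have hbig : Summable (fun j : ℕ => ((n:ℝ)) * rhoTilde d m (j + n)
      + rhoTilde d m n * ((j:ℝ) * (1/2)^j)) :=
    (((summable_nat_add_iff n).mpr hsum).mul_left _).add hksum'
  have hgeo' : ∀ j : ℕ, rhoTilde d m (j + n) ≤ rhoTilde d m n * (1/2)^j := by
    intro j; simpa [add_comm] using hgeo j
  have hptle : ∀ j : ℕ, ((j + n : ℕ):ℝ) * rhoTilde d m (j + n)
      ≤ (n:ℝ) * rhoTilde d m (j + n) + rhoTilde d m n * ((j:ℝ) * (1/2)^j) := by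
    intro j
    have h2 : (j:ℝ) * rhoTilde d m (j + n) ≤ (j:ℝ) * (rhoTilde d m n * (1/2)^j) :=
      mul_le_mul_of_nonneg_left (hgeo' j) (Nat.cast_nonneg j)
    push_cast
    nlinarith [h2]
  have hksum : Summable (fun k : ℕ => (k:ℝ) * rhoTilde d m k) := by
    rw [← summable_nat_add_iff n]
    refine hbig.of_nonneg_of_le (fun j => mul_nonneg (Nat.cast_nonneg _) (hrpos _).le)
      (fun j => hptle j)
  -- the normalization constant
  set S : ℝ := ∑' j, rhoTilde d m j with hS
  have h00 : rhoTilde d m 0 = 1 := by simp [rhoTilde]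
  have hS1 : 1 ≤ S := by
    have := Summable.le_tsum hsum 0 (fun j _ => (hrpos j).le)
    rw [h00] at this
    rw [hS]; exact this
  have hS0 : 0 < S := by linarith
  have hSn : rhoTilde d m n ≤ S := by
    rw [hS]; exact Summable.le_tsum hsum n (fun j _ => (hrpos j).le)
  -- bound the unnormalized mean
  have hT : (∑' k : ℕ, (k:ℝ) * rhoTilde d m k) ≤ (n:ℝ) * S + 2 * S := by
    have hsplit : (∑ i ∈ Finset.range n, (i:ℝ) * rhoTilde d m i)
        + (∑' j : ℕ, ((j + n : ℕ):ℝ) * rhoTilde d m (j + n))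
        = ∑' k : ℕ, (k:ℝ) * rhoTilde d m k := Summable.sum_add_tsum_nat_add n hksum
    have hSsplit : (∑ i ∈ Finset.range n, rhoTilde d m i)
        + (∑' j : ℕ, rhoTilde d m (j + n)) = S := by
      rw [hS]; exact Summable.sum_add_tsum_nat_add n hsum
    have htail : (∑' j : ℕ, ((j + n : ℕ):ℝ) * rhoTilde d m (j + n))
        ≤ (n:ℝ) * (∑' j : ℕ, rhoTilde d m (j + n)) + rhoTilde d m n * 2 := by
      have hsum2 : Summable (fun j : ℕ => ((j + n : ℕ):ℝ) * rhoTilde d m (j + n)) :=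
        (summable_nat_add_iff n).mpr hksum
      have h := Summable.tsum_le_tsum hptle hsum2 hbig
      refine le_trans h ?_
      rw [Summable.tsum_add (((summable_nat_add_iff n).mpr hsum).mul_left _) hksum',
        tsum_mul_left, tsum_mul_left]
      have hgeoval : (∑' j : ℕ, (j:ℝ) * (1/2)^j) = 2 := by
        have := tsum_coe_mul_geometric_of_norm_lt_one half_norm
        rw [this]; norm_num
      rw [hgeoval]
    have hhead : (∑ i ∈ Finset.range n, (i:ℝ) * rhoTilde d m i)
        ≤ (n:ℝ) * ∑ i ∈ Finset.range n, rhoTilde d m i := by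
      rw [Finset.mul_sum]
      refine Finset.sum_le_sum (fun i hi => ?_)
      have : (i:ℝ) ≤ (n:ℝ) := by
        exact_mod_cast (Finset.mem_range.mp hi).le
      exact mul_le_mul_of_nonneg_right this (hrpos i).le
    have hmulS : (n:ℝ) * S = (n:ℝ) * (∑ i ∈ Finset.range n, rhoTilde d m i)
        + (n:ℝ) * (∑' j : ℕ, rhoTilde d m (j + n)) := by
      rw [← hSsplit]; ring
    linarith [hsplit, hhead, htail, hmulS, hSn]
  -- the mean
  have hmean : (∑' k : ℕ, (k : ℝ) * rhoStat d m k) ≤ (n:ℝ) + 2 := by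
    have heq : (∑' k : ℕ, (k : ℝ) * rhoStat d m k)
        = (∑' k : ℕ, (k:ℝ) * rhoTilde d m k) / S := by
      rw [← tsum_div_const]
      refine tsum_congr (fun k => ?_)
      rw [rhoStat, ← hS, mul_div_assoc]
    rw [heq, div_le_iff₀ hS0]
    nlinarith [hT, hS0]
  -- conclude
  constructor
  · rw [hcast]
    have hn0 : (0:ℝ) ≤ (n:ℝ) := Nat.cast_nonneg n
    linarith [hmean]
  · have hxb : x ≤ 1.194 * (m/d) := by
      rw [hx, mul_div_assoc]
      exact mul_le_mul_of_nonneg_right log_three_lt.le (by positivity)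
    have h65 : (6:ℝ)/5 * m / d = 1.2 * (m/d) := by ring
    rw [h65]
    linarith [hmean, hnx, hxb, htd]
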